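/- arXiv:2312.12032 — 2 statements merged into one kernel-verified Lean document; each statement's English description precedes it below -/
import Mathlib

section
/- If f : ℝⁿ → ℝ is locally Lipschitz, x₀ ∈ ℝⁿ, v ∈ ℝⁿ \ {0}, and ε > 0, then for all t ∈ (0, ε/‖v‖], f(x₀ + t v) ≤ f(x₀) + t · max{⟨ξ, v⟩ : ξ ∈ ∂_ε f(x₀)}, where ∂_ε f(x₀) is the Goldstein ε-subdifferential (the convex hull of the union of Clarke subdifferentials over the closed ε-ball around x₀). -/
open Filter Set Topology RealInnerProductSpace

noncomputable def clarkeDir {E : Type*} [NormedAddCommGroup E] [InnerProductSpace ℝ E]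
    (f : E → ℝ) (x v : E) : ℝ :=
  Filter.limsup (fun p : E × ℝ => (f (p.1 + p.2 • v) - f p.1) / p.2)
    ((nhds x) ×ˢ (nhdsWithin 0 (Set.Ioi 0)))

noncomputable def clarkeSubdiff {E : Type*} [NormedAddCommGroup E] [InnerProductSpace ℝ E]
    (f : E → ℝ) (x : E) : Set E :=
  {ξ | ∀ v, ⟪ξ, v⟫ ≤ clarkeDir f x v}

noncomputable def goldsteinSubdiff {E : Type*} [NormedAddCommGroup E] [InnerProductSpace ℝ E]
    (f : E → ℝ) (ε : ℝ) (x : E) : Set E :=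
  convexHull ℝ (⋃ y ∈ Metric.closedBall x ε, clarkeSubdiff f y)

/-!
Along the ray `s ↦ x₀ + s • v`, the right Dini derivative of `f` at `s` is at most the Clarke
derivative `f°(x₀ + s • v; v)`. Near a point where `f` is Lipschitz, `f°(y; ·)` is a finite
sublinear function, so Hahn–Banach gives `ξ ∈ ∂f(y)` with `⟪ξ, v⟫ = f°(y; v)`. For `s ≤ t` the
point `y = x₀ + s • v` lies in the `ε`-ball, so `ξ ∈ ∂_ε f(x₀)` and the supremum dominates the
Dini derivative on `[0, t)`; a one-sided mean value inequality integrates this bound. The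
supremum is finite because `f` is Lipschitz on a compact neighbourhood of the ball, which
bounds every Clarke subgradient there.
-/

open Metric
open scoped NNReal

theorem exists_linearMap_le_sublinear_eq {E : Type*} [AddCommGroup E] [Module ℝ E] (N : E → ℝ)
    (N_hom : ∀ c : ℝ, 0 < c → ∀ x, N (c • x) = c * N x) (N_add : ∀ x y, N (x + y) ≤ N x + N y)
    {v : E} (hv : v ≠ 0) : ∃ g : E →ₗ[ℝ] ℝ, (∀ x, g x ≤ N x) ∧ g v = N v := by
  have N_zero : N 0 = 0 := by
    have h := N_hom 2 two_pos 0
    rw [smul_zero] at h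
    linarith
  let F : E →ₗ.[ℝ] ℝ := LinearPMap.mkSpanSingleton v (N v) hv
  have hF : ∀ x : F.domain, F x ≤ N x := by
    rintro ⟨x, hx⟩
    obtain ⟨a, rfl⟩ := Submodule.mem_span_singleton.1 hx
    rw [LinearPMap.mkSpanSingleton'_apply, smul_eq_mul, RingHom.id_apply]
    rcases lt_trichotomy a 0 with ha | rfl | ha
    · -- `0 = N 0 ≤ N (a • v) + N (-a • v)` and `N (-a • v) = -a * N v`
      have := N_add (a • v) (-a • v)
      rw [← add_smul, add_neg_cancel, zero_smul, N_zero, N_hom (-a) (neg_pos.2 ha)] at this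
      linarith
    · simp [N_zero]
    · exact (N_hom a ha v).ge
  obtain ⟨g, hgF, hgN⟩ := exists_extension_of_le_sublinear F N N_hom N_add hF
  refine ⟨g, hgN, ?_⟩
  rw [hgF ⟨v, Submodule.mem_span_singleton_self v⟩]
  exact LinearPMap.mkSpanSingleton_apply ℝ ℝ hv (N v)

section Clarke

variable {E : Type*} [NormedAddCommGroup E]

noncomputable def clarkeFilter (y : E) : Filter (E × ℝ) := 𝓝 y ×ˢ 𝓝[>] 0

instance clarkeFilter_neBot (y : E) : (clarkeFilter y).NeBot :=
  prod_neBot.2 ⟨inferInstance, inferInstance⟩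

theorem tendsto_fst_clarkeFilter (y : E) : Tendsto Prod.fst (clarkeFilter y) (𝓝 y) :=
  tendsto_fst

theorem tendsto_snd_clarkeFilter (y : E) : Tendsto Prod.snd (clarkeFilter y) (𝓝 0) :=
  tendsto_snd.mono_right nhdsWithin_le_nhds

theorem eventually_snd_pos_clarkeFilter (y : E) : ∀ᶠ p in clarkeFilter y, 0 < p.2 :=
  tendsto_snd.eventually self_mem_nhdsWithin

theorem tendsto_mul_snd_clarkeFilter (y : E) {c : ℝ} (hc : 0 < c) :
    Tendsto (fun p : E × ℝ => (p.1, c * p.2)) (clarkeFilter y) (clarkeFilter y) := by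
  have hlim := (tendsto_snd_clarkeFilter y).const_mul c
  rw [mul_zero] at hlim
  exact tendsto_fst.prodMk (tendsto_nhdsWithin_iff.2
    ⟨hlim, (eventually_snd_pos_clarkeFilter y).mono fun p hp => mul_pos hc hp⟩)

section Quotient

variable [NormedSpace ℝ E]

noncomputable def clarkeQuotient (f : E → ℝ) (w : E) (p : E × ℝ) : ℝ :=
  (f (p.1 + p.2 • w) - f p.1) / p.2

theorem tendsto_add_smul_clarkeFilter (y w : E) :
    Tendsto (fun p : E × ℝ => (p.1 + p.2 • w, p.2)) (clarkeFilter y) (clarkeFilter y) := by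
  refine Tendsto.prodMk ?_ tendsto_snd
  simpa using (tendsto_fst_clarkeFilter y).add ((tendsto_snd_clarkeFilter y).smul_const w)

theorem clarkeQuotient_add (f : E → ℝ) (w₁ w₂ : E) (p : E × ℝ) :
    clarkeQuotient f (w₁ + w₂) p =
      clarkeQuotient f w₁ (p.1 + p.2 • w₂, p.2) + clarkeQuotient f w₂ p := by
  have hpt : p.1 + p.2 • (w₁ + w₂) = p.1 + p.2 • w₂ + p.2 • w₁ := by rw [smul_add]; abel
  simp only [clarkeQuotient, hpt]
  ring

theorem clarkeQuotient_smul (f : E → ℝ) {c : ℝ} (hc : c ≠ 0) (w : E) (p : E × ℝ) :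
    clarkeQuotient f (c • w) p = c * clarkeQuotient f w (p.1, c * p.2) := by
  rcases eq_or_ne p.2 0 with hp | hp
  · simp [clarkeQuotient, hp]
  · simp only [clarkeQuotient, smul_smul, mul_comm p.2 c]
    field_simp

theorem eventually_abs_clarkeQuotient_le {f : E → ℝ} {y : E} {K : ℝ≥0} {s : Set E}
    (hs : s ∈ 𝓝 y) (hK : LipschitzOnWith K f s) (w : E) :
    ∀ᶠ p in clarkeFilter y, |clarkeQuotient f w p| ≤ K * ‖w‖ := by
  have hshift := (tendsto_fst_clarkeFilter y).comp (tendsto_add_smul_clarkeFilter y w)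
  filter_upwards [tendsto_fst_clarkeFilter y hs, hshift hs, eventually_snd_pos_clarkeFilter y]
    with p hp hp' hpos
  rw [clarkeQuotient, abs_div, abs_of_pos hpos, div_le_iff₀ hpos, ← Real.dist_eq]
  calc dist (f (p.1 + p.2 • w)) (f p.1) ≤ K * dist (p.1 + p.2 • w) p.1 :=
        hK.dist_le_mul _ hp' _ hp
    _ = K * ‖w‖ * p.2 := by
      rw [dist_eq_norm, add_sub_cancel_left, norm_smul, Real.norm_of_nonneg hpos.le]; ring

theorem isBoundedUnder_clarkeQuotient {f : E → ℝ} {y : E} {K : ℝ≥0} {s : Set E}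
    (hs : s ∈ 𝓝 y) (hK : LipschitzOnWith K f s) (w : E) :
    IsBoundedUnder (· ≤ ·) (clarkeFilter y) (clarkeQuotient f w) ∧
      IsBoundedUnder (· ≥ ·) (clarkeFilter y) (clarkeQuotient f w) :=
  isBoundedUnder_le_abs.1 <|
    isBoundedUnder_of_eventually_le (eventually_abs_clarkeQuotient_le hs hK w)

end Quotient

variable [InnerProductSpace ℝ E]

theorem clarkeDir_eq_limsup (f : E → ℝ) (y w : E) :
    clarkeDir f y w = limsup (clarkeQuotient f w) (clarkeFilter y) := rfl

theorem clarkeDir_le_iff {f : E → ℝ} {y : E} {K : ℝ≥0} {s : Set E}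
    (hs : s ∈ 𝓝 y) (hK : LipschitzOnWith K f s) {w : E} {c : ℝ} :
    clarkeDir f y w ≤ c ↔ ∀ r > c, ∀ᶠ p in clarkeFilter y, clarkeQuotient f w p ≤ r := by
  have hb := isBoundedUnder_clarkeQuotient hs hK w
  rw [clarkeDir_eq_limsup]
  exact limsup_le_iff' hb.2.isCoboundedUnder_le hb.1

theorem clarkeDir_le_mul_norm {f : E → ℝ} {y : E} {K : ℝ≥0} {s : Set E}
    (hs : s ∈ 𝓝 y) (hK : LipschitzOnWith K f s) (w : E) : clarkeDir f y w ≤ K * ‖w‖ :=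
  (clarkeDir_le_iff hs hK).2 fun _ hr => (eventually_abs_clarkeQuotient_le hs hK w).mono
    fun _ hp => ((le_abs_self _).trans hp).trans hr.le

theorem clarkeDir_add_le {f : E → ℝ} {y : E} {K : ℝ≥0} {s : Set E}
    (hs : s ∈ 𝓝 y) (hK : LipschitzOnWith K f s) (w₁ w₂ : E) :
    clarkeDir f y (w₁ + w₂) ≤ clarkeDir f y w₁ + clarkeDir f y w₂ := by
  refine (clarkeDir_le_iff hs hK).2 fun r hr => ?_
  obtain ⟨d, hd, rfl⟩ : ∃ d > 0, r = clarkeDir f y w₁ + clarkeDir f y w₂ + 2 * d :=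
    ⟨(r - (clarkeDir f y w₁ + clarkeDir f y w₂)) / 2, by linarith, by ring⟩
  have h₁ := (clarkeDir_le_iff (w := w₁) hs hK).1 le_rfl (clarkeDir f y w₁ + d) (by linarith)
  have h₂ := (clarkeDir_le_iff (w := w₂) hs hK).1 le_rfl (clarkeDir f y w₂ + d) (by linarith)
  filter_upwards [tendsto_add_smul_clarkeFilter y w₂ h₁, h₂] with p hp₁ hp₂
  rw [clarkeQuotient_add]
  linarith [show clarkeQuotient f w₁ (p.1 + p.2 • w₂, p.2) ≤ _ from hp₁]

theorem clarkeDir_smul_le {f : E → ℝ} {y : E} {K : ℝ≥0} {s : Set E}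
    (hs : s ∈ 𝓝 y) (hK : LipschitzOnWith K f s) {c : ℝ} (hc : 0 < c) (w : E) :
    clarkeDir f y (c • w) ≤ c * clarkeDir f y w := by
  refine (clarkeDir_le_iff hs hK).2 fun r hr => ?_
  have h := (clarkeDir_le_iff hs hK).1 le_rfl (r / c) ((lt_div_iff₀' hc).2 hr)
  filter_upwards [tendsto_mul_snd_clarkeFilter y hc h] with p hp
  rw [clarkeQuotient_smul f hc.ne']
  exact (le_div_iff₀' hc).1 hp

theorem clarkeDir_smul {f : E → ℝ} {y : E} {K : ℝ≥0} {s : Set E}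
    (hs : s ∈ 𝓝 y) (hK : LipschitzOnWith K f s) {c : ℝ} (hc : 0 < c) (w : E) :
    clarkeDir f y (c • w) = c * clarkeDir f y w := by
  refine le_antisymm (clarkeDir_smul_le hs hK hc w) ?_
  have h := clarkeDir_smul_le hs hK (inv_pos.2 hc) (c • w)
  rw [inv_smul_smul₀ hc.ne'] at h
  exact (le_inv_mul_iff₀ hc).1 h

theorem exists_mem_clarkeSubdiff_inner_eq [CompleteSpace E] {f : E → ℝ} {y : E} {K : ℝ≥0}
    {s : Set E} (hs : s ∈ 𝓝 y) (hK : LipschitzOnWith K f s) {v : E} (hv : v ≠ 0) :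
    ∃ ξ ∈ clarkeSubdiff f y, ⟪ξ, v⟫ = clarkeDir f y v := by
  obtain ⟨g, hgN, hgv⟩ := exists_linearMap_le_sublinear_eq (clarkeDir f y)
    (fun _ hc w => clarkeDir_smul hs hK hc w) (clarkeDir_add_le hs hK) hv
  have hg_bound : ∀ w, ‖g w‖ ≤ K * ‖w‖ := fun w => by
    have h₁ := (hgN w).trans (clarkeDir_le_mul_norm hs hK w)
    have h₂ := (hgN (-w)).trans (clarkeDir_le_mul_norm hs hK (-w))
    rw [map_neg, norm_neg] at h₂
    exact abs_le.2 ⟨by linarith, h₁⟩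
  refine ⟨(InnerProductSpace.toDual ℝ E).symm (g.mkContinuous K hg_bound), fun w => ?_, ?_⟩
  · rw [InnerProductSpace.toDual_symm_apply, LinearMap.mkContinuous_apply]
    exact hgN w
  · rw [InnerProductSpace.toDual_symm_apply, LinearMap.mkContinuous_apply, hgv]

theorem norm_le_of_mem_clarkeSubdiff {f : E → ℝ} {y : E} {K : ℝ≥0} {s : Set E}
    (hs : s ∈ 𝓝 y) (hK : LipschitzOnWith K f s) {ξ : E} (hξ : ξ ∈ clarkeSubdiff f y) :
    ‖ξ‖ ≤ K := by
  have h : ‖ξ‖ * ‖ξ‖ ≤ K * ‖ξ‖ := by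
    rw [← real_inner_self_eq_norm_mul_norm]
    exact (hξ ξ).trans (clarkeDir_le_mul_norm hs hK ξ)
  rcases (norm_nonneg ξ).eq_or_lt with h0 | hpos
  · rw [← h0]; exact K.coe_nonneg
  · exact le_of_mul_le_mul_right h hpos

theorem isBounded_goldsteinSubdiff [ProperSpace E] {f : E → ℝ} (hf : LocallyLipschitz f)
    (ε : ℝ) (x : E) : Bornology.IsBounded (goldsteinSubdiff f ε x) := by
  obtain ⟨K, hK⟩ := hf.locallyLipschitzOn.exists_lipschitzOnWith_of_compact
    (isCompact_closedBall x (ε + 1))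
  refine isBounded_convexHull.2 ((isBounded_closedBall (x := 0) (r := K)).subset ?_)
  simp only [subset_def, mem_iUnion₂, mem_closedBall_zero_iff]
  rintro ξ ⟨y, hy, hξ⟩
  have hnhds : closedBall x (ε + 1) ∈ 𝓝 y :=
    mem_of_superset (closedBall_mem_nhds y one_pos)
      (closedBall_subset_closedBall' (by linarith [mem_closedBall.1 hy]))
  exact norm_le_of_mem_clarkeSubdiff hnhds hK hξ

theorem clarkeDir_le_sSup_inner_goldsteinSubdiff [ProperSpace E] {f : E → ℝ}
    (hf : LocallyLipschitz f) {ε : ℝ} {x y v : E} (hy : y ∈ closedBall x ε) (hv : v ≠ 0) :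
    clarkeDir f y v ≤ sSup ((fun ξ => ⟪ξ, v⟫) '' goldsteinSubdiff f ε x) := by
  obtain ⟨C, hC⟩ := (isBounded_goldsteinSubdiff hf ε x).exists_norm_le
  have hbdd : BddAbove ((fun ξ => ⟪ξ, v⟫) '' goldsteinSubdiff f ε x) := by
    refine ⟨C * ‖v‖, ?_⟩
    rintro _ ⟨ξ, hξ, rfl⟩
    exact (real_inner_le_norm ξ v).trans (mul_le_mul_of_nonneg_right (hC ξ hξ) (norm_nonneg v))
  obtain ⟨K, s, hs, hK⟩ := hf y
  obtain ⟨ξ, hξ, hξv⟩ := exists_mem_clarkeSubdiff_inner_eq hs hK hv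
  rw [← hξv]
  exact le_csSup hbdd ⟨ξ, subset_convexHull ℝ _ (mem_biUnion hy hξ), rfl⟩

theorem eventually_slope_lt_of_clarkeDir_lt {f : E → ℝ} {x w : E} {a : ℝ} {K : ℝ≥0}
    {s : Set E} (hs : s ∈ 𝓝 (x + a • w)) (hK : LipschitzOnWith K f s) {r : ℝ}
    (hr : clarkeDir f (x + a • w) w < r) :
    ∀ᶠ b in 𝓝[>] a, slope (fun t => f (x + t • w)) a b < r := by
  have hpair : Tendsto (fun b => (x + a • w, b - a)) (𝓝[>] a) (clarkeFilter (x + a • w)) := by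
    refine tendsto_const_nhds.prodMk (tendsto_nhdsWithin_iff.2 ⟨?_, ?_⟩)
    · simpa using ((continuous_sub_right a).tendsto a).mono_left nhdsWithin_le_nhds
    · filter_upwards [self_mem_nhdsWithin] with b (hb : a < b) using sub_pos.2 hb
  simp only [slope_def_field]
  filter_upwards [hpair.eventually (eventually_lt_of_limsup_lt hr
    (isBoundedUnder_clarkeQuotient hs hK w).1)] with b hb
  have hpt : x + a • w + (b - a) • w = x + b • w := by rw [sub_smul]; abel
  rwa [hpt] at hb

theorem le_add_mul_of_clarkeDir_le {f : E → ℝ} (hf : LocallyLipschitz f) {x v : E} {t c : ℝ}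
    (ht : 0 ≤ t) (hc : ∀ s ∈ Ico 0 t, clarkeDir f (x + s • v) v ≤ c) :
    f (x + t • v) ≤ f x + t * c := by
  have hcont : Continuous fun s : ℝ => f (x + s • v) := hf.continuous.comp (by fun_prop)
  have hB : ∀ s : ℝ, HasDerivAt (fun s => f x + s * c) c s := fun s => by
    simpa using ((hasDerivAt_id s).mul_const c).const_add (f x)
  refine image_le_of_liminf_slope_right_le_deriv_boundary hcont.continuousOn (by simp)
    (by fun_prop) (fun s _ => (hB s).hasDerivWithinAt) (fun s hs r hr => ?_) ⟨ht, le_rfl⟩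
  obtain ⟨K, u, hu, hK⟩ := hf (x + s • v)
  exact (eventually_slope_lt_of_clarkeDir_lt hu hK ((hc s hs).trans_lt hr)).frequently

end Clarke

theorem stmt0_general {n : ℕ} (f : EuclideanSpace ℝ (Fin n) → ℝ) (hf : LocallyLipschitz f)
    (x₀ v : EuclideanSpace ℝ (Fin n)) (hv : v ≠ 0) (ε : ℝ) :
    ∀ t ∈ Set.Ioc (0:ℝ) (ε / ‖v‖),
      f (x₀ + t • v) ≤ f x₀ + t * sSup ((fun ξ => ⟪ξ, v⟫) '' goldsteinSubdiff f ε x₀) := by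
  rintro t ⟨ht, htε⟩
  refine le_add_mul_of_clarkeDir_le hf ht.le fun s hs => ?_
  refine clarkeDir_le_sSup_inner_goldsteinSubdiff hf ?_ hv
  rw [mem_closedBall, dist_self_add_left, norm_smul, Real.norm_of_nonneg hs.1,
    ← le_div_iff₀ (norm_pos_iff.2 hv)]
  exact hs.2.le.trans htε

theorem stmt0 {n : ℕ} (f : EuclideanSpace ℝ (Fin n) → ℝ) (hf : LocallyLipschitz f)
    (x₀ v : EuclideanSpace ℝ (Fin n)) (hv : v ≠ 0) (ε : ℝ) (hε : 0 < ε) :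
    ∀ t ∈ Set.Ioc (0:ℝ) (ε / ‖v‖),
      f (x₀ + t • v) ≤ f x₀ + t * sSup ((fun ξ => ⟪ξ, v⟫) '' goldsteinSubdiff f ε x₀) :=
  stmt0_general f hf x₀ v hv ε
end

section
/- Let h : ℝ → ℝ be continuous and let (a_j), (b_j), (t_j) be generated by the bisection of the previous statement (a₁=0, b₁=T>0, h(a₁) < h(b₁), bisect toward the subinterval preserving h(a) < h(b)). Let t̄ be the common limit of the sequences. Then t_j < t̄ for infinitely many j ∈ ℕ. -/
/-!
With `t j = (a j + b j) / 2`, `j ↦ h (b j)` is nondecreasing and `h (a j) < h (b j)` is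
preserved; both endpoints converge to `t̄`, so `h (b j) ≤ h t̄`. If `t̄ ≤ t j` from some point on,
no step can move `a` right without reaching `t̄`, hence some `a k = t̄`, and
`h t̄ = h (a k) < h (b k) ≤ h t̄`.
-/

open Filter Set Topology

def BisectStep (h : ℝ → ℝ) (a b : ℕ → ℝ) : Prop :=
  ∀ j, (h (b j) > h ((a j + b j) / 2) →
          a (j + 1) = (a j + b j) / 2 ∧ b (j + 1) = b j) ∧
       (¬ h (b j) > h ((a j + b j) / 2) →
          a (j + 1) = a j ∧ b (j + 1) = (a j + b j) / 2)

namespace BisectStep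

variable {h : ℝ → ℝ} {a b : ℕ → ℝ}

theorem succ_cases (hstep : BisectStep h a b) (j : ℕ) :
    (a (j + 1) = (a j + b j) / 2 ∧ b (j + 1) = b j ∧ h ((a j + b j) / 2) < h (b j)) ∨
    (a (j + 1) = a j ∧ b (j + 1) = (a j + b j) / 2 ∧ h (b j) ≤ h ((a j + b j) / 2)) := by
  by_cases hc : h (b j) > h ((a j + b j) / 2)
  · exact Or.inl ⟨((hstep j).1 hc).1, ((hstep j).1 hc).2, hc⟩
  · exact Or.inr ⟨((hstep j).2 hc).1, ((hstep j).2 hc).2, not_lt.mp hc⟩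

theorem sub_succ (hstep : BisectStep h a b) (j : ℕ) :
    b (j + 1) - a (j + 1) = (b j - a j) / 2 := by
  rcases hstep.succ_cases j with ⟨ha, hb, -⟩ | ⟨ha, hb, -⟩ <;> rw [ha, hb] <;> ring

theorem sub_eq (hstep : BisectStep h a b) (j : ℕ) : b j - a j = (b 0 - a 0) / 2 ^ j := by
  induction j with
  | zero => simp
  | succ j ih => rw [hstep.sub_succ, ih, pow_succ, div_div]

theorem tendsto_sub (hstep : BisectStep h a b) :
    Tendsto (fun j => b j - a j) atTop (𝓝 0) := by
  have hpow := (tendsto_pow_atTop_nhds_zero_of_lt_one (by norm_num : (0 : ℝ) ≤ 2⁻¹)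
    (by norm_num)).const_mul (b 0 - a 0)
  rw [mul_zero] at hpow
  exact hpow.congr fun j => by rw [hstep.sub_eq j, inv_pow, div_eq_mul_inv]

theorem tendsto_left (hstep : BisectStep h a b) {t : ℝ}
    (hlim : Tendsto (fun j => (a j + b j) / 2) atTop (𝓝 t)) : Tendsto a atTop (𝓝 t) := by
  simpa [Pi.sub_def] using (hlim.sub (hstep.tendsto_sub.div_const 2)).congr fun j => by ring

theorem tendsto_right (hstep : BisectStep h a b) {t : ℝ}
    (hlim : Tendsto (fun j => (a j + b j) / 2) atTop (𝓝 t)) : Tendsto b atTop (𝓝 t) := by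
  simpa using (hlim.add (hstep.tendsto_sub.div_const 2)).congr fun j => by ring

theorem monotone_left (hstep : BisectStep h a b) (h0 : a 0 ≤ b 0) : Monotone a := by
  refine monotone_nat_of_le_succ fun j => ?_
  have hab : a j ≤ b j := by
    have := hstep.sub_eq j
    have : 0 ≤ (b 0 - a 0) / 2 ^ j := by have := sub_nonneg.mpr h0; positivity
    linarith
  rcases hstep.succ_cases j with ⟨ha, -, -⟩ | ⟨ha, -, -⟩ <;> rw [ha]; linarith

theorem monotone_apply_right (hstep : BisectStep h a b) : Monotone fun j => h (b j) := by
  refine monotone_nat_of_le_succ fun j => ?_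
  rcases hstep.succ_cases j with ⟨-, hb, -⟩ | ⟨-, hb, hc⟩ <;> rw [hb]
  exact hc

theorem apply_left_lt_apply_right (hstep : BisectStep h a b) (hinit : h (a 0) < h (b 0))
    (j : ℕ) : h (a j) < h (b j) := by
  induction j with
  | zero => exact hinit
  | succ j ih =>
    rcases hstep.succ_cases j with ⟨ha, hb, hc⟩ | ⟨ha, hb, hc⟩ <;> rw [ha, hb]
    exacts [hc, ih.trans_le hc]

theorem exists_left_eq_of_eventually_le (hstep : BisectStep h a b) (hmono : Monotone a)
    {t : ℝ} (ha : Tendsto a atTop (𝓝 t)) (hge : ∀ᶠ j in atTop, t ≤ (a j + b j) / 2) :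
    ∃ k, a k = t := by
  by_contra! hne
  have hlt : ∀ j, a j < t := fun j => (hmono.ge_of_tendsto ha j).lt_of_ne (hne j)
  obtain ⟨N, hN⟩ := eventually_atTop.mp hge
  -- a step to the right at a midpoint `≥ t` would push `a` past `t`
  have hconst : ∀ j ≥ N, a j = a N := by
    refine Nat.le_induction rfl fun j hj ih => ?_
    rcases hstep.succ_cases j with ⟨hs, -, -⟩ | ⟨hs, -, -⟩
    · exact absurd (hs ▸ hlt (j + 1)) (hN j hj).not_gt
    · rw [hs, ih]
  have : a N = t :=
    tendsto_nhds_unique (tendsto_atTop_of_eventually_const hconst) ha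
  exact hne N this

end BisectStep

theorem stmt6 (h : ℝ → ℝ) (hcont : Continuous h) (T : ℝ) (hT : 0 < T)
    (a b : ℕ → ℝ) (ha0 : a 0 = 0) (hb0 : b 0 = T)
    (hinit : h (a 0) < h (b 0)) (hstep : BisectStep h a b)
    (tbar : ℝ) (hlim : Tendsto (fun j => (a j + b j) / 2) atTop (𝓝 tbar)) :
    {j : ℕ | (a j + b j) / 2 < tbar}.Infinite := by
  by_contra hfin
  have hge : ∀ᶠ j in atTop, tbar ≤ (a j + b j) / 2 := by
    rw [← Nat.cofinite_eq_atTop]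
    simpa using (Set.not_infinite.mp hfin).eventually_cofinite_notMem
  have hmono : Monotone a := hstep.monotone_left (by rw [ha0, hb0]; exact hT.le)
  obtain ⟨k, hk⟩ := hstep.exists_left_eq_of_eventually_le hmono (hstep.tendsto_left hlim) hge
  have hbk : h (b k) ≤ h tbar := hstep.monotone_apply_right.ge_of_tendsto
    ((hcont.tendsto tbar).comp (hstep.tendsto_right hlim)) k
  have hak := hstep.apply_left_lt_apply_right hinit k
  rw [hk] at hak
  exact hak.not_ge hbk
end
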